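/- Let X ⊂ ℝ^n be nonempty convex compact, Q symmetric positive definite, q > 0, C ∈ ℝ^{n×n}, c ∈ ℝ^n, and let x⋆(z) := argmin_{x∈X} [ q xᵀQx + 2(Cz + c)ᵀx ]. If the matrix M := [[qQ, −C],[−Cᵀ, qQ]] ∈ ℝ^{2n×2n} is symmetric positive definite, then x⋆ is a contraction in the Q-norm: there exists ε ∈ (0,1] such that ‖x⋆(v) − x⋆(w)‖_Q ≤ (1−ε) ‖v − w‖_Q for all v, w ∈ ℝ^n. (Lemma 6, statement 1.) -/

import Mathlib

/-!
Optimality of `x⋆(z)` over the convex set `X` gives the variational inequality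
`(q Q x⋆(z) + C z + c)ᵀ (y - x⋆(z)) ≥ 0` for `y ∈ X`; adding it at `z = v` and `z = w` yields
`q ‖d‖²_Q ≤ -dᵀ C (v - w)` for `d = x⋆(v) - x⋆(w)`. By compactness of the unit sphere,
`M ≻ 0` survives subtracting `δ · diag(Q, Q)` for some `δ > 0`, i.e.
`2 aᵀ C b ≤ (q - δ)(‖a‖²_Q + ‖b‖²_Q)`, and rescaling `a`, `b` turns this into
`aᵀ C b ≤ (q - δ) ‖a‖_Q ‖b‖_Q`. Hence `‖d‖_Q ≤ (1 - δ/q) ‖v - w‖_Q`.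
-/

open Matrix Filter Topology Finset
open scoped Kronecker

noncomputable section

/-- Euclidean norm of a finitely-indexed real vector. -/
def eunorm {ι : Type*} [Fintype ι] (x : ι → ℝ) : ℝ := Real.sqrt (x ⬝ᵥ x)

/-- `S`-weighted norm `‖x‖_S = √(xᵀ S x)`. -/
def wnorm {ι : Type*} [Fintype ι] (S : Matrix ι ι ℝ) (x : ι → ℝ) : ℝ :=
  Real.sqrt (x ⬝ᵥ S.mulVec x)

/-- Quadratic cost `J(x,z) = q·xᵀQx + 2(Cz+c)ᵀx`. -/
def cost {n : ℕ} (Q C : Matrix (Fin n) (Fin n) ℝ) (qi : ℝ) (ci : Fin n → ℝ)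
    (x z : Fin n → ℝ) : ℝ :=
  qi * (x ⬝ᵥ Q.mulVec x) + 2 * ((C.mulVec z + ci) ⬝ᵥ x)

/-- `xst` is the optimal-response map: for every `z`, `xst z` minimizes the cost over `X`. -/
def IsOptResp {n : ℕ} (X : Set (Fin n → ℝ)) (Q C : Matrix (Fin n) (Fin n) ℝ)
    (qi : ℝ) (ci : Fin n → ℝ) (xst : (Fin n → ℝ) → (Fin n → ℝ)) : Prop :=
  ∀ z, xst z ∈ X ∧ ∀ y ∈ X, cost Q C qi ci (xst z) z ≤ cost Q C qi ci y z

/-- Stacked optimal responses `x⋆(z) = (x^{1⋆}(z^1);…;x^{N⋆}(z^N))`. -/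
def extMap {n N : ℕ} (xstar : Fin N → (Fin n → ℝ) → (Fin n → ℝ))
    (z : Fin N × Fin n → ℝ) : Fin N × Fin n → ℝ :=
  fun p => xstar p.1 (fun j => z (p.1, j)) p.2

/-- Extended aggregation map `A_ν(z) = (P^ν ⊗ I_n) x⋆(z)`. -/
def aggMap {n N : ℕ} (P : Matrix (Fin N) (Fin N) ℝ) (ν : ℕ)
    (xstar : Fin N → (Fin n → ℝ) → (Fin n → ℝ)) (z : Fin N × Fin n → ℝ) :
    Fin N × Fin n → ℝ :=
  ((P ^ ν) ⊗ₖ (1 : Matrix (Fin n) (Fin n) ℝ)).mulVec (extMap xstar z)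

/-- The matrix `(1/N)·1_N 1_Nᵀ` with all entries `1/N`. -/
def avgMat (N : ℕ) : Matrix (Fin N) (Fin N) ℝ := Matrix.of fun _ _ => (N : ℝ)⁻¹

/-- Mean-field aggregation map `A(z) = ((1/N)·1 1ᵀ ⊗ I_n) x⋆(z)`. -/
def meanAgg {n N : ℕ} (xstar : Fin N → (Fin n → ℝ) → (Fin n → ℝ))
    (z : Fin N × Fin n → ℝ) : Fin N × Fin n → ℝ :=
  ((avgMat N) ⊗ₖ (1 : Matrix (Fin n) (Fin n) ℝ)).mulVec (extMap xstar z)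

/-- Maximum-row-sum matrix norm `‖A‖_∞`. -/
def rowSumNorm {N : ℕ} (A : Matrix (Fin N) (Fin N) ℝ) : ℝ := ⨆ i, ∑ j, |A i j|

/-- Spectral norm (ℓ²-operator norm) of a real matrix. -/
def specNorm {ι : Type*} [Fintype ι] [DecidableEq ι] (P : Matrix ι ι ℝ) : ℝ :=
  ‖LinearMap.toContinuousLinearMap (Matrix.toEuclideanLin P)‖

/-- Map `A_{m,m}(z) = (P^m ⊗ I_n) x⋆((P^m ⊗ I_n) z)`. -/
def halfAgg {n N : ℕ} (P : Matrix (Fin N) (Fin N) ℝ) (m : ℕ)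
    (xstar : Fin N → (Fin n → ℝ) → (Fin n → ℝ)) (z : Fin N × Fin n → ℝ) :
    Fin N × Fin n → ℝ :=
  ((P ^ m) ⊗ₖ (1 : Matrix (Fin n) (Fin n) ℝ)).mulVec
    (extMap xstar (((P ^ m) ⊗ₖ (1 : Matrix (Fin n) (Fin n) ℝ)).mulVec z))

open Metric

section QuadraticForms

variable {ι : Type*} [Fintype ι]

lemma smul_dotProduct_mulVec_smul (A : Matrix ι ι ℝ) (a : ℝ) (x : ι → ℝ) :
    (a • x) ⬝ᵥ A *ᵥ (a • x) = a ^ 2 * (x ⬝ᵥ A *ᵥ x) := by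
  rw [mulVec_smul, smul_dotProduct, dotProduct_smul, smul_eq_mul, smul_eq_mul]
  ring

lemma continuous_dotProduct_mulVec_self (A : Matrix ι ι ℝ) :
    Continuous fun x : ι → ℝ => x ⬝ᵥ A *ᵥ x :=
  continuous_id.dotProduct (continuous_const.matrix_mulVec continuous_id)

lemma dotProduct_mulVec_le_of_forall_mem_sphere {A B : Matrix ι ι ℝ}
    (h : ∀ u ∈ sphere (0 : ι → ℝ) 1, u ⬝ᵥ A *ᵥ u ≤ u ⬝ᵥ B *ᵥ u) (x : ι → ℝ) :
    x ⬝ᵥ A *ᵥ x ≤ x ⬝ᵥ B *ᵥ x := by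
  rcases eq_or_ne x 0 with rfl | hx
  · simp
  have hnorm : ‖x‖ ≠ 0 := norm_ne_zero_iff.mpr hx
  have hu : ‖x‖⁻¹ • x ∈ sphere (0 : ι → ℝ) 1 := by
    simp [norm_smul, hnorm]
  have hux := h _ hu
  rw [smul_dotProduct_mulVec_smul, smul_dotProduct_mulVec_smul] at hux
  exact le_of_mul_le_mul_left hux (by positivity)

lemma Matrix.PosDef.exists_pos_mul_le {M : Matrix ι ι ℝ} (hM : M.PosDef) (N : Matrix ι ι ℝ) :
    ∃ δ : ℝ, 0 < δ ∧ ∀ x : ι → ℝ, δ * (x ⬝ᵥ N *ᵥ x) ≤ x ⬝ᵥ M *ᵥ x := by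
  suffices ∃ δ : ℝ, 0 < δ ∧ ∀ u ∈ sphere (0 : ι → ℝ) 1, u ⬝ᵥ (δ • N) *ᵥ u ≤ u ⬝ᵥ M *ᵥ u by
    obtain ⟨δ, hδ, h⟩ := this
    refine ⟨δ, hδ, fun x => ?_⟩
    simpa [smul_mulVec] using dotProduct_mulVec_le_of_forall_mem_sphere h x
  rcases (sphere (0 : ι → ℝ) 1).eq_empty_or_nonempty with hS | hS
  · exact ⟨1, one_pos, by simp [hS]⟩
  obtain ⟨u₀, hu₀, hmin⟩ :=
    (isCompact_sphere 0 1).exists_isMinOn hS (continuous_dotProduct_mulVec_self M).continuousOn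
  obtain ⟨u₁, -, hmax⟩ :=
    (isCompact_sphere 0 1).exists_isMaxOn hS (continuous_dotProduct_mulVec_self N).continuousOn
  have hu₀ : u₀ ≠ 0 := by rintro rfl; simp at hu₀
  have hm : 0 < u₀ ⬝ᵥ M *ᵥ u₀ := by simpa using hM.dotProduct_mulVec_pos hu₀
  set K := u₁ ⬝ᵥ N *ᵥ u₁
  refine ⟨(u₀ ⬝ᵥ M *ᵥ u₀) / (|K| + 1), by positivity, fun u hu => ?_⟩
  rw [smul_mulVec, dotProduct_smul, smul_eq_mul]
  calc (u₀ ⬝ᵥ M *ᵥ u₀) / (|K| + 1) * (u ⬝ᵥ N *ᵥ u)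
      ≤ (u₀ ⬝ᵥ M *ᵥ u₀) / (|K| + 1) * (|K| + 1) := by
        gcongr
        exact (hmax hu).trans ((le_abs_self K).trans (le_add_of_nonneg_right zero_le_one))
    _ = u₀ ⬝ᵥ M *ᵥ u₀ := div_mul_cancel₀ _ (by positivity)
    _ ≤ u ⬝ᵥ M *ᵥ u := hmin hu

end QuadraticForms

lemma sumElim_dotProduct_fromBlocks_mulVec {R m n : Type*} [CommSemiring R] [Fintype m]
    [Fintype n] (A : Matrix m m R) (B : Matrix m n R) (C : Matrix n m R) (D : Matrix n n R)
    (a : m → R) (b : n → R) :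
    Sum.elim a b ⬝ᵥ fromBlocks A B C D *ᵥ Sum.elim a b
      = a ⬝ᵥ A *ᵥ a + a ⬝ᵥ B *ᵥ b + (b ⬝ᵥ C *ᵥ a + b ⬝ᵥ D *ᵥ b) := by
  simp [fromBlocks_mulVec, dotProduct_block, dotProduct_add]

section WeightedNorm

variable {ι : Type*} [Fintype ι] {S : Matrix ι ι ℝ}

lemma wnorm_nonneg (S : Matrix ι ι ℝ) (x : ι → ℝ) : 0 ≤ wnorm S x := Real.sqrt_nonneg _

lemma wnorm_neg (S : Matrix ι ι ℝ) (x : ι → ℝ) : wnorm S (-x) = wnorm S x := by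
  simp [wnorm, mulVec_neg]

lemma Matrix.PosSemidef.wnorm_sq (hS : S.PosSemidef) (x : ι → ℝ) :
    wnorm S x ^ 2 = x ⬝ᵥ S *ᵥ x :=
  Real.sq_sqrt (by simpa using hS.dotProduct_mulVec_nonneg x)

lemma Matrix.PosDef.wnorm_pos (hS : S.PosDef) {x : ι → ℝ} (hx : x ≠ 0) : 0 < wnorm S x :=
  Real.sqrt_pos.mpr (by simpa using hS.dotProduct_mulVec_pos hx)

lemma Matrix.PosDef.dotProduct_mulVec_le_mul_wnorm (hS : S.PosDef) {C : Matrix ι ι ℝ} {κ : ℝ}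
    (h : ∀ a b, 2 * (a ⬝ᵥ C *ᵥ b) ≤ κ * (a ⬝ᵥ S *ᵥ a + b ⬝ᵥ S *ᵥ b)) (a b : ι → ℝ) :
    a ⬝ᵥ C *ᵥ b ≤ κ * (wnorm S a * wnorm S b) := by
  rcases eq_or_ne a 0 with rfl | ha
  · simp [wnorm]
  rcases eq_or_ne b 0 with rfl | hb
  · simp [wnorm]
  have hα := hS.wnorm_pos ha
  have hβ := hS.wnorm_pos hb
  have hscaled := h (wnorm S b • a) (wnorm S a • b)
  rw [mulVec_smul, dotProduct_smul, smul_dotProduct, smul_eq_mul, smul_eq_mul,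
    smul_dotProduct_mulVec_smul, smul_dotProduct_mulVec_smul, ← hS.posSemidef.wnorm_sq,
    ← hS.posSemidef.wnorm_sq] at hscaled
  refine le_of_mul_le_mul_left ?_ (mul_pos hα hβ)
  linarith

end WeightedNorm

lemma exists_two_mul_le_of_posDef_fromBlocks {ι : Type*} [Fintype ι] {Q C : Matrix ι ι ℝ}
    {q : ℝ} (hM : (fromBlocks (q • Q) (-C) (-Cᵀ) (q • Q)).PosDef) :
    ∃ δ : ℝ, 0 < δ ∧
      ∀ a b : ι → ℝ, 2 * (a ⬝ᵥ C *ᵥ b) ≤ (q - δ) * (a ⬝ᵥ Q *ᵥ a + b ⬝ᵥ Q *ᵥ b) := by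
  obtain ⟨δ, hδ, h⟩ := hM.exists_pos_mul_le (fromBlocks Q 0 0 Q)
  refine ⟨δ, hδ, fun a b => ?_⟩
  have hab := h (Sum.elim a b)
  simp only [sumElim_dotProduct_fromBlocks_mulVec, smul_mulVec, neg_mulVec, dotProduct_smul,
    dotProduct_neg, dotProduct_transpose_mulVec, zero_mulVec, dotProduct_zero, smul_eq_mul] at hab
  linarith

lemma nonneg_of_forall_mul_add_sq_mul_nonneg {a b : ℝ}
    (h : ∀ t, 0 < t → t ≤ 1 → 0 ≤ t * a + t ^ 2 * b) : 0 ≤ a := by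
  have hlim : Tendsto (fun t => a + t * b) (𝓝[>] 0) (𝓝 a) := by
    refine tendsto_nhdsWithin_of_tendsto_nhds ?_
    exact (show Continuous fun t : ℝ => a + t * b by fun_prop).tendsto' 0 a (by simp)
  refine ge_of_tendsto hlim ?_
  filter_upwards [Ioc_mem_nhdsGT one_pos] with t ⟨ht0, ht1⟩
  exact nonneg_of_mul_nonneg_right (by linear_combination h t ht0 ht1) ht0

section OptimalResponse

variable {n : ℕ} {X : Set (Fin n → ℝ)} {Q C : Matrix (Fin n) (Fin n) ℝ} {q : ℝ} {c : Fin n → ℝ}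
  {xstar : (Fin n → ℝ) → (Fin n → ℝ)}

lemma cost_add_smul (hQ : Q.IsSymm) (x h z : Fin n → ℝ) (t : ℝ) :
    cost Q C q c (x + t • h) z = cost Q C q c x z
      + t * (2 * ((q • (Q *ᵥ x) + (C *ᵥ z + c)) ⬝ᵥ h)) + t ^ 2 * (q * (h ⬝ᵥ Q *ᵥ h)) := by
  have hsymm : x ⬝ᵥ Q *ᵥ h = h ⬝ᵥ Q *ᵥ x := by
    rw [← dotProduct_transpose_mulVec, hQ.eq]
  simp only [cost, mulVec_add, mulVec_smul, dotProduct_add, add_dotProduct, dotProduct_smul,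
    smul_dotProduct, smul_eq_mul, dotProduct_comm (Q *ᵥ x) h]
  linear_combination q * t * hsymm

lemma IsOptResp.variational_ineq (hX : Convex ℝ X) (hQ : Q.IsSymm)
    (hx : IsOptResp X Q C q c xstar) (z : Fin n → ℝ) {y : Fin n → ℝ} (hy : y ∈ X) :
    0 ≤ (q • (Q *ᵥ xstar z) + (C *ᵥ z + c)) ⬝ᵥ (y - xstar z) := by
  suffices 0 ≤ 2 * ((q • (Q *ᵥ xstar z) + (C *ᵥ z + c)) ⬝ᵥ (y - xstar z)) by linarith
  refine nonneg_of_forall_mul_add_sq_mul_nonneg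
    (b := q * ((y - xstar z) ⬝ᵥ Q *ᵥ (y - xstar z))) fun t ht0 ht1 => ?_
  have hmin := (hx z).2 _ (hX.add_smul_sub_mem (hx z).1 hy ⟨ht0.le, ht1⟩)
  rw [cost_add_smul hQ] at hmin
  linarith

lemma IsOptResp.mul_quadForm_sub_add_cross_nonpos (hX : Convex ℝ X) (hQ : Q.IsSymm)
    (hx : IsOptResp X Q C q c xstar) (v w : Fin n → ℝ) :
    q * ((xstar v - xstar w) ⬝ᵥ Q *ᵥ (xstar v - xstar w))
      + (xstar v - xstar w) ⬝ᵥ C *ᵥ (v - w) ≤ 0 := by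
  have hv := hx.variational_ineq hX hQ v (hx w).1
  have hw := hx.variational_ineq hX hQ w (hx v).1
  simp only [mulVec_sub, dotProduct_sub, sub_dotProduct, add_dotProduct, smul_dotProduct,
    smul_eq_mul] at hv hw ⊢
  simp only [dotProduct_comm (Q *ᵥ _), dotProduct_comm (C *ᵥ _), dotProduct_comm c] at hv hw
  linarith

end OptimalResponse

theorem optResp_contraction_general {n : ℕ}
    (X : Set (Fin n → ℝ))
    (hconv : Convex ℝ X)
    (Q : Matrix (Fin n) (Fin n) ℝ) (hQ : Q.PosDef) (q : ℝ) (hq : 0 < q)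
    (C : Matrix (Fin n) (Fin n) ℝ) (c : Fin n → ℝ)
    (xstar : (Fin n → ℝ) → (Fin n → ℝ))
    (hxstar : IsOptResp X Q C q c xstar)
    (hM : (Matrix.fromBlocks (q • Q) (-C) (-Cᵀ) (q • Q)).PosDef) :
    ∃ ε : ℝ, 0 < ε ∧ ε ≤ 1 ∧
      ∀ v w : Fin n → ℝ,
        wnorm Q (xstar v - xstar w) ≤ (1 - ε) * wnorm Q (v - w) := by
  obtain ⟨δ, hδ, hcross⟩ := exists_two_mul_le_of_posDef_fromBlocks hM
  set ε := min (δ / q) 1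
  refine ⟨ε, lt_min (div_pos hδ hq) one_pos, min_le_right _ _, fun v w => ?_⟩
  set d := xstar v - xstar w
  have hmono := hxstar.mul_quadForm_sub_add_cross_nonpos hconv
    (isHermitian_iff_isSymm.mp hQ.isHermitian) v w
  have hCS := hQ.dotProduct_mulVec_le_mul_wnorm hcross (-d) (v - w)
  rw [neg_dotProduct, wnorm_neg] at hCS
  have hkey : q * wnorm Q d ^ 2 ≤ (q - δ) * (wnorm Q d * wnorm Q (v - w)) := by
    rw [hQ.posSemidef.wnorm_sq]
    linarith
  have hδε : q - δ ≤ q * (1 - ε) := by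
    have := (le_div_iff₀ hq).mp (min_le_left (δ / q) 1)
    linarith
  have hβ := wnorm_nonneg Q (v - w)
  rcases (wnorm_nonneg Q d).eq_or_lt with hα | hα
  · rw [← hα]
    exact mul_nonneg (sub_nonneg.mpr (min_le_right _ _)) hβ
  · have hqα : q * wnorm Q d ≤ (q - δ) * wnorm Q (v - w) :=
      le_of_mul_le_mul_left (by nlinarith) hα
    refine le_of_mul_le_mul_left ?_ hq
    nlinarith

/-- Lemma 6, statement 1: if `M = [[qQ, −C],[−Cᵀ, qQ]] ≻ 0`, then the
constrained minimizer `x⋆` is a contraction in the `Q`-norm. -/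
theorem optResp_contraction {n : ℕ} (hn : 0 < n)
    (X : Set (Fin n → ℝ)) (hne : X.Nonempty)
    (hconv : Convex ℝ X) (hcpt : IsCompact X)
    (Q : Matrix (Fin n) (Fin n) ℝ) (hQ : Q.PosDef) (q : ℝ) (hq : 0 < q)
    (C : Matrix (Fin n) (Fin n) ℝ) (c : Fin n → ℝ)
    (xstar : (Fin n → ℝ) → (Fin n → ℝ))
    (hxstar : IsOptResp X Q C q c xstar)
    (hM : (Matrix.fromBlocks (q • Q) (-C) (-Cᵀ) (q • Q)).PosDef) :
    ∃ ε : ℝ, 0 < ε ∧ ε ≤ 1 ∧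
      ∀ v w : Fin n → ℝ,
        wnorm Q (xstar v - xstar w) ≤ (1 - ε) * wnorm Q (v - w) :=
  optResp_contraction_general X hconv Q hQ q hq C c xstar hxstar hM
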